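/- Fix integers 0 < p < d, set q := d − p and δ := p/d, and let K > 1 be an integer and δ' ∈ [0, δ). Let b_1, …, b_{K−1} ∈ {0,1} satisfy b_1 + … + b_{K−1} ≤ δ'·(K − 1), and let H_0, …, H_{K−1} be the associated stack-height sequence. Then Σ_{t=0}^{K−1} H_t > (δ − δ')²·d·(K − 1)²/(2δ). -/

import Mathlib

/-!
A step raises the stack by `p` or lowers it by at most `q`, so `H_t ≥ p t - d c_t`, where `c_t`
counts the ones among the first `t` bits; together with `H_t ≥ 0` this gives
`H_t ≥ p · max(0, t - a)` for `t ≤ n = K - 1` and `a = d c_n / p`. The hypothesis on the bits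
makes `a < n`, and the discrete sum `Σ_{t ≤ n} max(0, t - a)` exceeds the area `(n - a)² / 2`
under the ramp, which is the claimed bound once `a` is eliminated.
-/

/-- The stack-height sequence determined by parameters `p, q` and bits `b`
(0-indexed: `b i` is the bit `b_{i+1}`): `H_0 = 0`, and `H_{i+1}` is obtained from `H_i`
by adding `p` chips if `b_{i+1} = 0`, and removing `min(q, H_i)` chips if `b_{i+1} = 1`
(truncated subtraction on `ℕ` realizes `max(H_i - q, 0)`). -/
def stackH (p q : ℕ) (b : ℕ → Bool) : ℕ → ℕ
  | 0 => 0
  | i + 1 => if b i then stackH p q b i - q else stackH p q b i + p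

/-- `cars b t` is `b_1 + ⋯ + b_t`. -/
def cars (b : ℕ → Bool) (t : ℕ) : ℕ :=
  ((Finset.range t).filter (fun i => b i = true)).card
open Finset

lemma cars_succ (b : ℕ → Bool) (t : ℕ) :
    cars b (t + 1) = if b t then cars b t + 1 else cars b t := by
  simp only [cars, range_add_one, filter_insert]
  split
  · exact card_insert_of_notMem (by simp)
  · rfl

lemma cars_mono (b : ℕ → Bool) : Monotone (cars b) := fun _ _ h =>
  card_le_card (filter_subset_filter _ (range_subset_range.2 h))

lemma sub_mul_cars_le_stackH (p q : ℕ) (b : ℕ → Bool) (t : ℕ) :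
    (p * t : ℝ) - (p + q) * cars b t ≤ stackH p q b t := by
  induction t with
  | zero => simp [stackH, cars]
  | succ t ih =>
    rw [cars_succ]
    cases hbt : b t
    · simp only [stackH, hbt, Bool.false_eq_true, if_false]
      push_cast
      linarith
    · have hsub : (stackH p q b t : ℝ) - q ≤ (stackH p q b t - q : ℕ) :=
        sub_le_iff_le_add.2 (by exact_mod_cast le_tsub_add)
      simp only [stackH, hbt, if_true]
      push_cast
      linarith

lemma max_sub_mul_cars_le_stackH (p q : ℕ) (b : ℕ → Bool) {t n : ℕ} (htn : t ≤ n) :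
    max 0 ((p * t : ℝ) - (p + q) * cars b n) ≤ stackH p q b t := by
  have hcars : (cars b t : ℝ) ≤ cars b n := by exact_mod_cast cars_mono b htn
  have := mul_le_mul_of_nonneg_left hcars (by positivity : (0 : ℝ) ≤ p + q)
  exact max_le (Nat.cast_nonneg _) (by linarith [sub_mul_cars_le_stackH p q b t])

lemma le_sum_range_succ_max_zero_sub (n : ℕ) {a : ℝ} (ha₀ : 0 ≤ a) (han : a ≤ n) :
    (n - a) * (n - a + 1) / 2 ≤ ∑ t ∈ range (n + 1), max 0 ((t : ℝ) - a) := by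
  induction n with
  | zero =>
    have : a = 0 := le_antisymm (by simpa using han) ha₀
    simp [this]
  | succ n ih =>
    rw [sum_range_succ]
    push_cast at han ⊢
    rw [max_eq_right (by linarith)]
    rcases le_or_gt a n with hle | hlt
    · nlinarith [ih hle]
    · -- the last term `x = n + 1 - a ∈ (0, 1)` alone is at least `x (x + 1) / 2`
      have : 0 ≤ ∑ t ∈ range (n + 1), max 0 ((t : ℝ) - a) :=
        sum_nonneg fun _ _ => le_max_left _ _
      nlinarith

theorem stack_height_lower_bound_general (p d : ℕ) (hp : 0 < p) (hpd : p < d)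
    (K : ℕ) (hK : 1 < K) (δ' : ℝ) (hδ' : δ' < (p : ℝ) / d)
    (b : ℕ → Bool) (hb : (cars b (K - 1) : ℝ) ≤ δ' * (K - 1)) :
    ((p : ℝ) / d - δ') ^ 2 * d * ((K : ℝ) - 1) ^ 2 / (2 * ((p : ℝ) / d))
      < ∑ t ∈ Finset.range K, (stackH p (d - p) b t : ℝ) := by
  obtain ⟨n, rfl⟩ : ∃ n, K = n + 1 := ⟨K - 1, by omega⟩
  have hn : (1 : ℝ) ≤ n := by exact_mod_cast Nat.lt_succ_iff.1 hK
  simp only [Nat.add_sub_cancel, Nat.cast_add, Nat.cast_one, add_sub_cancel_right] at hb ⊢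
  have hpR : (0 : ℝ) < p := by exact_mod_cast hp
  have hdR : (0 : ℝ) < d := by exact_mod_cast hp.trans hpd
  have hpq : (p : ℝ) + (d - p : ℕ) = d := by rw [Nat.cast_sub hpd.le]; ring
  have hδd : d * δ' * n < p * n := by
    have := (lt_div_iff₀ hdR).1 hδ'
    nlinarith
  have hcars : d * (cars b n : ℝ) ≤ d * δ' * n := by
    linarith [mul_le_mul_of_nonneg_left hb hdR.le]
  set a : ℝ := d * cars b n / p with ha
  have han : a < n := by rw [ha, div_lt_iff₀ hpR]; linarith
  have hH : ∀ t ∈ range (n + 1), p * max 0 ((t : ℝ) - a) ≤ stackH p (d - p) b t := by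
    intro t ht
    rw [mul_max_of_nonneg _ _ hpR.le, mul_zero, mul_sub, ha, mul_div_cancel₀ _ hpR.ne', ← hpq]
    exact max_sub_mul_cars_le_stackH p (d - p) b (Nat.lt_succ_iff.1 (mem_range.1 ht))
  calc ((p : ℝ) / d - δ') ^ 2 * d * n ^ 2 / (2 * (p / d))
      = ((p : ℝ) * n - d * δ' * n) ^ 2 / (2 * p) := by field_simp
    _ ≤ ((p : ℝ) * n - d * cars b n) ^ 2 / (2 * p) := by gcongr
    _ = (p : ℝ) * ((n - a) ^ 2 / 2) := by rw [ha]; field_simp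
    _ < p * ((n - a) * (n - a + 1) / 2) := by gcongr; nlinarith
    _ ≤ p * ∑ t ∈ range (n + 1), max 0 ((t : ℝ) - a) := by
        gcongr; exact le_sum_range_succ_max_zero_sub n (by positivity) han.le
    _ ≤ ∑ t ∈ range (n + 1), (stackH p (d - p) b t : ℝ) := by rw [mul_sum]; exact sum_le_sum hH

/-- Key estimate for condition (ii) of Lemma 3.1: with `q = d - p`, `δ = p/d`, if
`b_1 + ⋯ + b_{K-1} ≤ δ'(K-1)` for some `δ' ∈ [0, δ)`, then the total stack height
satisfies `Σ_{t=0}^{K-1} H_t > (δ - δ')² d (K-1)² / (2δ)`. -/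
theorem stack_height_lower_bound (p d : ℕ) (hp : 0 < p) (hpd : p < d)
    (K : ℕ) (hK : 1 < K) (δ' : ℝ) (hδ'0 : 0 ≤ δ') (hδ' : δ' < (p : ℝ) / d)
    (b : ℕ → Bool) (hb : (cars b (K - 1) : ℝ) ≤ δ' * (K - 1)) :
    ((p : ℝ) / d - δ') ^ 2 * d * ((K : ℝ) - 1) ^ 2 / (2 * ((p : ℝ) / d))
      < ∑ t ∈ Finset.range K, (stackH p (d - p) b t : ℝ) :=
  stack_height_lower_bound_general p d hp hpd K hK δ' hδ' b hb
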